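/- Let ℳ be a finite set with at least two elements. For each M ∈ ℳ let Ẑ^M be a real-valued random variable on a common probability space, the family (Ẑ^M)_{M∈ℳ} being mutually independent and square-integrable, with E[Ẑ^M] = Z^M and Var(Ẑ^M) = σ_M² < ∞. Suppose M* ∈ ℳ is the unique maximiser of M ↦ Z^M. Then P(Ẑ^{M*} > Ẑ^L for all L ≠ M*) ≥ 1 − Σ_{L ≠ M*} (1 + (Z^{M*} − Z^L)²/(σ_{M*}² + σ_L²))^{−1}. -/

import Mathlib

/-!
If the true model `M*` is not selected then `Ẑ^{M*} ≤ Ẑ^L` for some `L ≠ M*`, so by the union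
bound it suffices to bound each `P(Ẑ^{M*} ≤ Ẑ^L)`. The difference `Ẑ^L - Ẑ^{M*}` has mean
`-(Z^{M*} - Z^L)` and, by independence, variance `σ_{M*}² + σ_L²`; Cantelli's one-sided
inequality `P(Y ≥ E Y + t) ≤ Var Y / (Var Y + t²)` then gives exactly the summand.
-/

open MeasureTheory ProbabilityTheory

namespace ProbabilityTheory

variable {Ω : Type*} [MeasurableSpace Ω] {μ : Measure Ω} [IsProbabilityMeasure μ]

lemma integral_sq_eq_variance_add_sq {X : Ω → ℝ} (hX : MemLp X 2 μ) :
    ∫ ω, X ω ^ 2 ∂μ = Var[X; μ] + μ[X] ^ 2 := by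
  rw [variance_eq_sub hX]
  simp only [Pi.pow_apply, sub_add_cancel]

/-- Markov's inequality applied to `(Y - μ[Y] + u)²`. -/
lemma measureReal_mean_add_le_le_of_shift {Y : Ω → ℝ} (hY : MemLp Y 2 μ) {t u : ℝ}
    (ht : 0 < t) (hu : 0 ≤ u) :
    μ.real {ω | μ[Y] + t ≤ Y ω} ≤ (Var[Y; μ] + u ^ 2) / (t + u) ^ 2 := by
  set X : Ω → ℝ := fun ω ↦ Y ω - μ[Y] + u
  have hX : MemLp X 2 μ := (hY.sub (memLp_const _)).add (memLp_const u)
  have hX_mean : μ[X] = u := by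
    have hY_int := hY.integrable one_le_two
    rw [integral_add (f := fun ω ↦ Y ω - μ[Y]) (hY_int.sub (integrable_const _))
      (integrable_const u), integral_sub hY_int (integrable_const _)]
    simp
  have hX_var : Var[X; μ] = Var[Y; μ] :=
    (variance_add_const (hY.aestronglyMeasurable.sub aestronglyMeasurable_const) u).trans
      (variance_sub_const hY.aestronglyMeasurable _)
  have hsub : {ω | μ[Y] + t ≤ Y ω} ⊆ {ω | (t + u) ^ 2 ≤ X ω ^ 2} := fun ω hω ↦ by
    have : t + u ≤ X ω := by simp only [Set.mem_ofPred_eq, X] at hω ⊢; linarith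
    exact pow_le_pow_left₀ (by positivity) this 2
  have hmarkov := mul_meas_ge_le_integral_of_nonneg (ae_of_all μ fun ω ↦ sq_nonneg (X ω))
    hX.integrable_sq ((t + u) ^ 2)
  rw [integral_sq_eq_variance_add_sq hX, hX_mean, hX_var] at hmarkov
  rw [le_div_iff₀ (by positivity), mul_comm]
  exact (mul_le_mul_of_nonneg_left (measureReal_mono hsub) (by positivity)).trans hmarkov

/-- Cantelli's inequality. -/
lemma measureReal_mean_add_le_le {Y : Ω → ℝ} (hY : MemLp Y 2 μ) {t : ℝ} (ht : 0 < t) :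
    μ.real {ω | μ[Y] + t ≤ Y ω} ≤ Var[Y; μ] / (Var[Y; μ] + t ^ 2) := by
  have hv : 0 ≤ Var[Y; μ] := variance_nonneg Y μ
  -- the shift `u = Var Y / t` optimises the weak form
  convert measureReal_mean_add_le_le_of_shift hY ht (div_nonneg hv ht.le) using 1
  field_simp
  ring

lemma IndepFun.variance_sub {X Y : Ω → ℝ} (hX : MemLp X 2 μ) (hY : MemLp Y 2 μ)
    (h : X ⟂ᵢ[μ] Y) : Var[X - Y; μ] = Var[X; μ] + Var[Y; μ] := by
  rw [ProbabilityTheory.variance_sub hX hY, h.covariance_eq_zero hX hY]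
  ring

lemma IndepFun.measureReal_le_le {X Y : Ω → ℝ} (hX : MemLp X 2 μ) (hY : MemLp Y 2 μ)
    (h : X ⟂ᵢ[μ] Y) (hlt : μ[X] < μ[Y]) :
    μ.real {ω | Y ω ≤ X ω} ≤
      (Var[Y; μ] + Var[X; μ]) / ((Var[Y; μ] + Var[X; μ]) + (μ[Y] - μ[X]) ^ 2) := by
  have hmean : μ[X - Y] = μ[X] - μ[Y] :=
    integral_sub (hX.integrable one_le_two) (hY.integrable one_le_two)
  have hcantelli := measureReal_mean_add_le_le (hX.sub hY) (sub_pos.mpr hlt)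
  rw [hmean, h.variance_sub hX hY, add_comm Var[X; μ]] at hcantelli
  convert hcantelli using 3
  simp only [Pi.sub_apply, sub_add_sub_cancel, sub_self, sub_nonneg]

end ProbabilityTheory

namespace MeasureTheory

lemma one_sub_measureReal_compl_le {α : Type*} [MeasurableSpace α] (μ : Measure α)
    [IsProbabilityMeasure μ] (s : Set α) : 1 - μ.real sᶜ ≤ μ.real s := by
  have := measureReal_union_le (μ := μ) s sᶜ
  rw [Set.union_compl_self, probReal_univ] at this
  linarith

end MeasureTheory

theorem model_selection_probability_bound_sum_general
    {Ω : Type*} [MeasurableSpace Ω] (μ : Measure Ω) [IsProbabilityMeasure μ]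
    {𝓜 : Type*} [Fintype 𝓜] [DecidableEq 𝓜]
    (Zhat : 𝓜 → Ω → ℝ)
    (hL2 : ∀ m, MemLp (Zhat m) 2 μ)
    (hindep : iIndepFun Zhat μ)
    (Z : 𝓜 → ℝ) (hZ : ∀ m, ∫ ω, Zhat m ω ∂μ = Z m)
    (Mstar : 𝓜)
    (hmax : ∀ L, L ≠ Mstar → Z L < Z Mstar) :
    1 - ∑ L ∈ Finset.univ.erase Mstar,
        (variance (Zhat Mstar) μ + variance (Zhat L) μ) /
          ((variance (Zhat Mstar) μ + variance (Zhat L) μ) + (Z Mstar - Z L) ^ 2) ≤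
      (μ {ω | ∀ L, L ≠ Mstar → Zhat L ω < Zhat Mstar ω}).toReal := by
  have hcompl : {ω | ∀ L, L ≠ Mstar → Zhat L ω < Zhat Mstar ω}ᶜ =
      ⋃ L ∈ Finset.univ.erase Mstar, {ω | Zhat Mstar ω ≤ Zhat L ω} := by
    ext ω
    simp
  calc _ ≤ 1 - ∑ L ∈ Finset.univ.erase Mstar, μ.real {ω | Zhat Mstar ω ≤ Zhat L ω} := by
        gcongr with L hL_mem
        have hL : L ≠ Mstar := Finset.ne_of_mem_erase hL_mem
        have hlt : μ[Zhat L] < μ[Zhat Mstar] := by simpa only [hZ] using hmax L hL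
        simpa only [hZ] using (hindep.indepFun hL).measureReal_le_le (hL2 L) (hL2 Mstar) hlt
    _ ≤ 1 - μ.real {ω | ∀ L, L ≠ Mstar → Zhat L ω < Zhat Mstar ω}ᶜ := by
        rw [hcompl]
        gcongr
        exact measureReal_biUnion_finset_le _ _
    _ ≤ _ := one_sub_measureReal_compl_le μ _

/-- Probability of selecting the correct model by maximising independent unbiased
marginal-likelihood estimators with per-model variances `σ_M²`:
`P(Ẑ^{M*} > Ẑ^L ∀ L ≠ M*) ≥ 1 − Σ_{L ≠ M*} (1 + (Z^{M*} − Z^L)²/(σ_{M*}² + σ_L²))⁻¹`,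
where each summand `(1 + d²/s)⁻¹` is written in the equivalent form `s/(s + d²)`, which
realises the stated convention that the summand is `0` when `s = σ_{M*}² + σ_L² = 0`. -/
theorem model_selection_probability_bound_sum
    {Ω : Type*} [MeasurableSpace Ω] (μ : Measure Ω) [IsProbabilityMeasure μ]
    {𝓜 : Type*} [Fintype 𝓜] [DecidableEq 𝓜]
    (hcard : 2 ≤ Fintype.card 𝓜)
    (Zhat : 𝓜 → Ω → ℝ)
    (hmeas : ∀ m, Measurable (Zhat m))
    (hL2 : ∀ m, MemLp (Zhat m) 2 μ)
    (hindep : iIndepFun Zhat μ)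
    (Z : 𝓜 → ℝ) (hZ : ∀ m, ∫ ω, Zhat m ω ∂μ = Z m)
    (Mstar : 𝓜)
    (hmax : ∀ L, L ≠ Mstar → Z L < Z Mstar) :
    1 - ∑ L ∈ Finset.univ.erase Mstar,
        (variance (Zhat Mstar) μ + variance (Zhat L) μ) /
          ((variance (Zhat Mstar) μ + variance (Zhat L) μ) + (Z Mstar - Z L) ^ 2) ≤
      (μ {ω | ∀ L, L ≠ Mstar → Zhat L ω < Zhat Mstar ω}).toReal :=
  model_selection_probability_bound_sum_general μ Zhat hL2 hindep Z hZ Mstar hmax
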